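/- Let E be a finite-dimensional real inner product space and let S and T be subspaces of E. Let U = P_{S^⊥}(T) be the image of T under the orthogonal projection P_{S^⊥} of E onto the orthogonal complement S^⊥ of S. Then the orthogonal projection of E onto (S + T)^⊥ equals the composition P_{U^⊥} ∘ P_{S^⊥}, where P_{U^⊥} is the orthogonal projection of E onto the orthogonal complement of U. -/

import Mathlib

open Submodule

/-!
Write `P_K` for the orthogonal projection onto `K` and `U = P_{Sᗮ}(T)`. Each `t ∈ T` splits as
`(t - P_{Sᗮ} t) + P_{Sᗮ} t ∈ S + U`, so `S + T = S + U` and `(S + T)ᗮ = Sᗮ ⊓ Uᗮ`. Since `U ≤ Sᗮ`,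
the subspace `Sᗮ ⊓ Uᗮ` is the orthogonal complement of `U` inside `Sᗮ`, and projecting first onto
`Sᗮ` and then onto `Uᗮ` lands in it while moving `x` only by vectors orthogonal to it.
-/

namespace Submodule

variable {𝕜 E : Type*} [RCLike 𝕜] [NormedAddCommGroup E] [InnerProductSpace 𝕜 E]

theorem sup_map_starProjection_orthogonal (S T : Submodule 𝕜 E) [S.HasOrthogonalProjection] :
    S ⊔ T.map (Sᗮ.starProjection : E →ₗ[𝕜] E) = S ⊔ T := by
  have hsub : ∀ t, t - Sᗮ.starProjection t ∈ S := fun t => by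
    rw [starProjection_orthogonal_val, sub_sub_cancel]
    exact S.starProjection_apply_mem t
  apply le_antisymm
  · refine sup_le le_sup_left (map_le_iff_le_comap.mpr fun t ht => ?_)
    rw [mem_comap, ContinuousLinearMap.coe_coe, ← sub_sub_cancel t (Sᗮ.starProjection t)]
    exact (S ⊔ T).sub_mem (mem_sup_right ht) (mem_sup_left (hsub t))
  · refine sup_le le_sup_left fun t ht => ?_
    rw [← sub_add_cancel t (Sᗮ.starProjection t)]
    exact add_mem_sup (hsub t) (mem_map_of_mem ht)

theorem starProjection_inf_orthogonal_of_le {K U : Submodule 𝕜 E} (hUK : U ≤ K)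
    [K.HasOrthogonalProjection] [Uᗮ.HasOrthogonalProjection] [(K ⊓ Uᗮ).HasOrthogonalProjection] :
    (K ⊓ Uᗮ).starProjection = Uᗮ.starProjection ∘L K.starProjection := by
  ext x
  rw [ContinuousLinearMap.comp_apply]
  set y := K.starProjection x
  set v := Uᗮ.starProjection y
  have hyv : y - v ∈ Uᗮᗮ := sub_starProjection_mem_orthogonal y
  have hUK' : Uᗮᗮ ≤ K := K.orthogonal_orthogonal ▸ orthogonal_le (orthogonal_le hUK)
  have hv : v ∈ K ⊓ Uᗮ :=
    ⟨sub_sub_cancel y v ▸ K.sub_mem (K.starProjection_apply_mem x) (hUK' hyv),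
      Uᗮ.starProjection_apply_mem y⟩
  refine eq_starProjection_of_mem_orthogonal' hv (z := (x - y) + (y - v)) ?_ (by abel)
  exact add_mem (orthogonal_le inf_le_left (sub_starProjection_mem_orthogonal x))
    (orthogonal_le inf_le_right hyv)

end Submodule

theorem stmt14 (E : Type*) [NormedAddCommGroup E] [InnerProductSpace ℝ E]
    [FiniteDimensional ℝ E]
    (S T : Submodule ℝ E)
    (U : Submodule ℝ E)
    (hU : U = T.map (Sᗮ.subtypeL.comp (orthogonalProjection Sᗮ)).toLinearMap) :
    ((S ⊔ T)ᗮ).subtypeL.comp (orthogonalProjection (S ⊔ T)ᗮ)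
      = (Uᗮ.subtypeL.comp (orthogonalProjection Uᗮ)).comp
          (Sᗮ.subtypeL.comp (orthogonalProjection Sᗮ)) := by
  change (S ⊔ T)ᗮ.starProjection = Uᗮ.starProjection ∘L Sᗮ.starProjection
  change U = T.map (Sᗮ.starProjection : E →ₗ[ℝ] E) at hU
  have hUS : U ≤ Sᗮ := hU ▸ map_le_iff_le_comap.mpr fun t _ => Sᗮ.starProjection_apply_mem t
  have hcompl : (S ⊔ T)ᗮ = Sᗮ ⊓ Uᗮ := by
    rw [inf_orthogonal, hU, sup_map_starProjection_orthogonal]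
  simp only [hcompl]
  exact starProjection_inf_orthogonal_of_le hUS
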